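/- arXiv:1709.06955 — 2 statements merged into one kernel-verified Lean document; each statement's English description precedes it below -/
import Mathlib

section
/- Let (u_1,…,u_i) be a reverse path with i ≥ 2 and let v ∈ V with v ≠ u_1. Then the deterministic PROBE score after the (i−1)-th iteration satisfies Score(v, i−1) = P(v,(u_1,…,u_i)), the first-meeting probability of v with respect to the reverse path (u_1,…,u_i). -/
open scoped BigOperators Classical

variable {V : Type*}

/-- `p` is a possible realization of a `√c`-walk from `u`: it is nonempty,
starts at `u`, and each step moves to an in-neighbor of the current node. -/
def IsWalkFrom (I : V → Finset V) (u : V) (p : List V) : Prop :=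
  p.head? = some u ∧ List.Chain' (fun a b => b ∈ I a) p

/-- The probability that the `√c`-walk from `u` is exactly the finite sequence `p`:
`(1−√c)·∏_{k=1}^{ℓ−1} (√c/|I(u_k)|)` if `p = (u_1,…,u_ℓ)` is a walk from `u`,
and `0` otherwise. -/
noncomputable def walkWeight (I : V → Finset V) (c : ℝ) (u : V) (p : List V) : ℝ :=
  if IsWalkFrom I u p then
    (1 - Real.sqrt c) *
      ∏ k ∈ Finset.range (p.length - 1), Real.sqrt c / ((I (p.getD k u)).card : ℝ)
  else 0

/-- Deterministic PROBE scores of a reverse path, where `q` is the *reversed*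
reverse path, i.e. `q = (u_i, u_{i-1}, …, u_1)` for the reverse path
`(u_1,…,u_i)`: `Score(v,0) = 1` iff `v = u_i`, and `Score(v,j+1) = 0` if
`v = u_{i-j-1}` (which is `q[j+1]`), else `∑_{x∈I(v)} (√c/|I(v)|)·Score(x,j)`. -/
noncomputable def Score (I : V → Finset V) (c : ℝ) (q : List V) : ℕ → V → ℝ
  | 0, v => if q.head? = some v then 1 else 0
  | j + 1, v =>
      if q[j + 1]? = some v then 0
      else ∑ x ∈ I v, Real.sqrt c / ((I v).card : ℝ) * Score I c q j x

/-- First-meeting probability `P(v,(u_1,…,u_i))` of `v` with respect to the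
reverse path `p = (u_1,…,u_i)`: the probability that a `√c`-walk from `v` has
length at least `i`, its `i`-th entry equals `u_i`, and its `k`-th entry differs
from `u_k` for all `1 ≤ k ≤ i−1`. -/
noncomputable def firstMeetProb (I : V → Finset V) (c : ℝ) (v : V) (p : List V) : ℝ :=
  ∑' w : List V,
    walkWeight I c v w *
      (if p.length ≤ w.length ∧ w[p.length - 1]? = p[p.length - 1]? ∧
          ∀ k < p.length - 1, w[k]? ≠ p[k]? then 1 else 0)

/-!
Condition on the first step of the `√c`-walk from `u`: it stops at once with probability `1 - √c`
and otherwise moves to each `x ∈ I u` with probability `√c / |I u|`. Hence the probability that it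
first meets the reversed path `q` at step `j + 1` vanishes when `u = q[j + 1]`, and otherwise is
the `√c / |I u|`-weighted sum over `x ∈ I u` of the same probability for step `j` from `x`, which
is the PROBE recursion. At step `0` the probability is `[u = q[0]]` times the total mass of the
walk, which is `1` because the walk has length `n + 1` with probability `(1 - √c) √c ^ n`.
-/

open scoped ENNReal

/-- Sums over walks are taken in `ℝ≥0∞`, where they need no summability argument. -/
noncomputable def walkMass (I : V → Finset V) (c : ℝ) (u : V) (w : List V) : ℝ≥0∞ :=
  ENNReal.ofReal (walkWeight I c u w)

section ListSums

variable {α : Type*}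

lemma tsum_list_eq_add_tsum_cons (g : List α → ℝ≥0∞) :
    ∑' w, g w = g [] + ∑' (a) (t), g (a :: t) := by
  have hinj : Function.Injective fun p : α × List α => p.1 :: p.2 := fun p q h => by
    simpa [Prod.ext_iff] using h
  rw [ENNReal.tsum_eq_add_tsum_ite [], ← hinj.tsum_eq, ENNReal.tsum_prod']
  · simp
  · rintro (_ | ⟨a, t⟩) hw
    · simp at hw
    · exact ⟨(a, t), rfl⟩

lemma tsum_list_eq_tsum_cons {g : List α → ℝ≥0∞} (a : α) (h0 : g [] = 0)
    (h : ∀ b t, b ≠ a → g (b :: t) = 0) : ∑' w, g w = ∑' t, g (a :: t) := by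
  rw [tsum_list_eq_add_tsum_cons, h0, zero_add, tsum_eq_single a fun b hb => by simp [h b _ hb]]

end ListSums

section Walks

variable (I : V → Finset V) (c : ℝ) {u x y : V} {t : List V}

lemma walkWeight_nonneg (hc : c ≤ 1) (u : V) (w : List V) : 0 ≤ walkWeight I c u w := by
  have hsqrt : Real.sqrt c ≤ 1 := Real.sqrt_le_one.mpr hc
  unfold walkWeight
  split_ifs
  · exact mul_nonneg (by linarith) (Finset.prod_nonneg fun _ _ => by positivity)
  · exact le_rfl

lemma walkMass_nil : walkMass I c u [] = 0 := by
  simp [walkMass, walkWeight, IsWalkFrom]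

lemma walkMass_cons_of_ne (h : y ≠ u) : walkMass I c u (y :: t) = 0 := by
  simp [walkMass, walkWeight, IsWalkFrom, h]

lemma walkMass_singleton : walkMass I c u [u] = ENNReal.ofReal (1 - Real.sqrt c) := by
  rw [walkMass, walkWeight, if_pos ⟨rfl, List.isChain_singleton u⟩]
  simp

lemma walkWeight_cons_cons (hx : x ∈ I u) :
    walkWeight I c u (u :: x :: t) =
      Real.sqrt c / (I u).card * walkWeight I c x (x :: t) := by
  by_cases hchain : List.IsChain (fun a b => b ∈ I a) (x :: t)
  · have hwalk : IsWalkFrom I u (u :: x :: t) := ⟨rfl, List.isChain_cons_cons.2 ⟨hx, hchain⟩⟩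
    have hprod : ∀ k ∈ Finset.range t.length,
        Real.sqrt c / (I ((u :: x :: t).getD (k + 1) u)).card =
          Real.sqrt c / (I ((x :: t).getD k x)).card := by
      intro k hk
      have hk' : k < (x :: t).length := Nat.lt_succ_of_lt (Finset.mem_range.1 hk)
      rw [List.getD_cons_succ, List.getD_eq_getElem _ _ hk', List.getD_eq_getElem _ _ hk']
    rw [walkWeight, walkWeight, if_pos hwalk, if_pos ⟨rfl, hchain⟩]
    simp only [List.length_cons, Nat.add_sub_cancel]
    rw [Finset.prod_range_succ', Finset.prod_congr rfl hprod]
    simp only [List.getD_cons_zero]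
    ring
  · rw [walkWeight, walkWeight, if_neg fun h => hchain (List.isChain_cons_cons.1 h.2).2,
      if_neg fun h => hchain h.2, mul_zero]

lemma walkMass_cons_cons :
    walkMass I c u (u :: x :: t) =
      (if x ∈ I u then ENNReal.ofReal (Real.sqrt c / (I u).card) else 0) *
        walkMass I c x (x :: t) := by
  by_cases hx : x ∈ I u
  · rw [if_pos hx, walkMass, walkWeight_cons_cons I c hx, ENNReal.ofReal_mul (by positivity),
      walkMass]
  · rw [if_neg hx, zero_mul, walkMass, walkWeight,
      if_neg fun h => hx (List.isChain_cons_cons.1 h.2).1, ENNReal.ofReal_zero]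

lemma tsum_walkMass_mul (f : List V → ℝ≥0∞) (u : V) :
    ∑' w, walkMass I c u w * f w =
      ENNReal.ofReal (1 - Real.sqrt c) * f [u] +
        ∑ x ∈ I u, ENNReal.ofReal (Real.sqrt c / (I u).card) *
          ∑' t, walkMass I c x t * f (u :: t) := by
  have hstart : ∀ z (g : List V → ℝ≥0∞),
      ∑' t, walkMass I c z t * g t = ∑' t, walkMass I c z (z :: t) * g (z :: t) := fun z g =>
    tsum_list_eq_tsum_cons z (by simp [walkMass_nil]) fun b t hb => by
      simp [walkMass_cons_of_ne I c hb]
  rw [hstart, tsum_list_eq_add_tsum_cons, walkMass_singleton]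
  congr 1
  rw [tsum_eq_sum (s := I u) fun x hx => by simp [walkMass_cons_cons, hx]]
  refine Finset.sum_congr rfl fun x hx => ?_
  simp only [walkMass_cons_cons, hx, if_true, mul_assoc, ENNReal.tsum_mul_left]
  rw [hstart x]

lemma tsum_walkMass_length (hI : ∀ v, (I v).Nonempty) (n : ℕ) (u : V) :
    ∑' w, walkMass I c u w * (if w.length = n + 1 then 1 else 0) =
      ENNReal.ofReal (1 - Real.sqrt c) * ENNReal.ofReal (Real.sqrt c) ^ n := by
  induction n generalizing u with
  | zero =>
    rw [tsum_walkMass_mul]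
    simp [walkMass_nil]
  | succ n ih =>
    have hcard : ((I u).card : ℝ) ≠ 0 := by exact_mod_cast (hI u).card_pos.ne'
    have hsplit : (I u).card * ENNReal.ofReal (Real.sqrt c / (I u).card) =
        ENNReal.ofReal (Real.sqrt c) := by
      rw [← ENNReal.ofReal_natCast, ← ENNReal.ofReal_mul (by positivity), mul_div_cancel₀ _ hcard]
    rw [tsum_walkMass_mul]
    simp only [List.length_cons, List.length_nil, Nat.add_right_cancel_iff, ih,
      Nat.right_eq_add, Nat.add_eq_zero_iff, one_ne_zero, and_false, if_false, mul_zero, zero_add,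
      Finset.sum_const, nsmul_eq_mul]
    rw [← mul_assoc, hsplit]
    ring

lemma tsum_walkMass (hI : ∀ v, (I v).Nonempty) (hc : c < 1) (u : V) :
    ∑' w, walkMass I c u w = 1 := by
  have hsqrt : Real.sqrt c < 1 := (Real.sqrt_lt' one_pos).2 (by simpa using hc)
  have hlength : ∀ w, walkMass I c u w =
      ∑' n : ℕ, walkMass I c u w * (if w.length = n + 1 then 1 else 0) := by
    rintro (_ | ⟨y, t⟩)
    · simp [walkMass_nil]
    · simp
  rw [tsum_congr hlength, ENNReal.tsum_comm, tsum_congr (tsum_walkMass_length I c hI · u),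
    ENNReal.tsum_mul_left, ENNReal.tsum_geometric, ← ENNReal.ofReal_one,
    ← ENNReal.ofReal_sub _ (Real.sqrt_nonneg c), ENNReal.ofReal_one]
  exact ENNReal.mul_inv_cancel (ENNReal.ofReal_pos.2 (sub_pos.2 hsqrt)).ne' ENNReal.ofReal_ne_top

end Walks

lemma score_nonneg (I : V → Finset V) (c : ℝ) (q : List V) (j : ℕ) (u : V) :
    0 ≤ Score I c q j u := by
  induction j generalizing u with
  | zero => rw [Score]; split_ifs <;> norm_num
  | succ j ih =>
    rw [Score]
    split_ifs
    · exact le_rfl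
    · exact Finset.sum_nonneg fun x _ => mul_nonneg (by positivity) (ih x)

/-- `w` meets the reversed path `q` for the first time at step `j`, comparing `w[k]` with
`q[j - k]`. -/
def FirstMeetAt (q : List V) (j : ℕ) (w : List V) : Prop :=
  j < w.length ∧ w[j]? = q[0]? ∧ ∀ k < j, w[k]? ≠ q[j - k]?

lemma firstMeetAt_zero_cons {q t : List V} {u : V} :
    FirstMeetAt q 0 (u :: t) ↔ q.head? = some u := by
  simp [FirstMeetAt, List.head?_eq_getElem?, eq_comm]

lemma firstMeetAt_succ_cons {q t : List V} {u : V} {j : ℕ} :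
    FirstMeetAt q (j + 1) (u :: t) ↔ q[j + 1]? ≠ some u ∧ FirstMeetAt q j t := by
  simp only [FirstMeetAt, List.length_cons, Nat.add_lt_add_iff_right, List.getElem?_cons_succ]
  constructor
  · rintro ⟨hlt, hj, hbefore⟩
    refine ⟨fun h => hbefore 0 j.succ_pos (by simpa using h.symm), hlt, hj, fun k hk => ?_⟩
    simpa using hbefore (k + 1) (by omega)
  · rintro ⟨hu, hlt, hj, hbefore⟩
    refine ⟨hlt, hj, ?_⟩
    rintro (_ | k) hk
    · simpa [eq_comm] using hu
    · simpa using hbefore k (by omega)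

lemma not_firstMeetAt_nil {q : List V} {j : ℕ} : ¬ FirstMeetAt q j [] := by
  simp [FirstMeetAt]

theorem tsum_walkMass_mul_firstMeetAt (I : V → Finset V) (hI : ∀ v, (I v).Nonempty) (c : ℝ)
    (hc : c < 1) (q : List V) (j : ℕ) (u : V) :
    ∑' w, walkMass I c u w * (if FirstMeetAt q j w then 1 else 0) =
      ENNReal.ofReal (Score I c q j u) := by
  induction j generalizing u with
  | zero =>
    have hstart : ∀ w, walkMass I c u w * (if FirstMeetAt q 0 w then 1 else 0) =
        (if q.head? = some u then 1 else 0) * walkMass I c u w := by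
      rintro (_ | ⟨y, t⟩)
      · simp [walkMass_nil]
      · rcases eq_or_ne y u with rfl | hy
        · simp only [firstMeetAt_zero_cons, mul_comm]
        · simp [walkMass_cons_of_ne I c hy]
    rw [tsum_congr hstart, ENNReal.tsum_mul_left, tsum_walkMass I c hI hc, mul_one, Score]
    split_ifs <;> simp
  | succ j ih =>
    rw [tsum_walkMass_mul, Score]
    simp only [firstMeetAt_succ_cons, not_firstMeetAt_nil, and_false, if_false, mul_zero, zero_add]
    by_cases hu : q[j + 1]? = some u
    · simp [hu]
    · simp only [ne_eq, hu, not_false_eq_true, true_and, ih, if_false]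
      rw [ENNReal.ofReal_sum_of_nonneg fun x _ =>
        mul_nonneg (by positivity) (score_nonneg I c q j x)]
      exact Finset.sum_congr rfl fun x _ => (ENNReal.ofReal_mul (by positivity)).symm

lemma firstMeetAt_reverse_iff {p w : List V} (hp : p ≠ []) :
    FirstMeetAt p.reverse (p.length - 1) w ↔
      p.length ≤ w.length ∧ w[p.length - 1]? = p[p.length - 1]? ∧
        ∀ k < p.length - 1, w[k]? ≠ p[k]? := by
  have hpos : 0 < p.length := List.length_pos_iff.2 hp
  have hlast : p.reverse[0]? = p[p.length - 1]? := by
    rw [List.getElem?_reverse (by simpa using hpos), Nat.sub_zero]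
  have hmid : ∀ k < p.length - 1, p.reverse[p.length - 1 - k]? = p[k]? := fun k hk => by
    rw [List.getElem?_reverse (by omega)]
    congr 1
    omega
  unfold FirstMeetAt
  rw [hlast]
  exact and_congr (by omega) <| and_congr_right fun _ =>
    forall₂_congr fun k hk => by rw [hmid k hk]


theorem score_eq_firstMeetProb_general
    (I : V → Finset V) (hI : ∀ v, (I v).Nonempty)
    (c : ℝ) (hc1 : c < 1)
    (p : List V) (hlen : 2 ≤ p.length)
    (v : V) :
    Score I c p.reverse (p.length - 1) v = firstMeetProb I c v p := by
  have hp : p ≠ [] := List.ne_nil_of_length_pos (by omega)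
  have hfinite : ∀ w, walkMass I c v w *
      (if FirstMeetAt p.reverse (p.length - 1) w then 1 else 0) ≠ ⊤ := fun w =>
    ENNReal.mul_ne_top ENNReal.ofReal_ne_top (by split_ifs <;> simp)
  rw [firstMeetProb, ← ENNReal.toReal_ofReal (score_nonneg I c _ _ v),
    ← tsum_walkMass_mul_firstMeetAt I hI c hc1, ENNReal.tsum_toReal_eq hfinite]
  refine tsum_congr fun w => ?_
  rw [ENNReal.toReal_mul, walkMass, ENNReal.toReal_ofReal (walkWeight_nonneg I c hc1.le v w),
    firstMeetAt_reverse_iff hp]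
  split_ifs <;> simp

/-- Lemma 3.2: for a reverse path `p = (u_1,…,u_i)` with `i ≥ 2` and a node
`v ≠ u_1`, the deterministic PROBE score after the `(i−1)`-th iteration equals
the first-meeting probability of `v` with respect to `p`. -/
theorem score_eq_firstMeetProb [Fintype V]
    (I : V → Finset V) (hI : ∀ v, (I v).Nonempty)
    (c : ℝ) (hc0 : 0 < c) (hc1 : c < 1)
    (p : List V) (hchain : List.Chain' (fun a b => b ∈ I a) p) (hlen : 2 ≤ p.length)
    (v : V) (hv : p.head? ≠ some v) :
    Score I c p.reverse (p.length - 1) v = firstMeetProb I c v p :=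
  score_eq_firstMeetProb_general I hI c hc1 p hlen v
end

section
/- Let W = (u_1,…,u_ℓ) be a fixed sequence with u_{k+1} ∈ I(u_k), and let ℓ_t be an integer with 1 ≤ ℓ_t ≤ ℓ. Then for every node x ∈ V and every integer d with ℓ−ℓ_t ≤ d ≤ ℓ−1, the diagonal sum of PROBE scores restricted to prefixes longer than ℓ_t satisfies 0 ≤ ∑_{j : 0 ≤ j ≤ d, ℓ−d+j > ℓ_t} Score^{(ℓ−d+j)}(x,j) ≤ (√c)^{d−(ℓ−ℓ_t)}, where Score^{(i)} denotes the deterministic PROBE scores of the prefix (u_1,…,u_i). -/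
open scoped BigOperators Classical

variable {V : Type*}

lemma Score_nonneg (I : V → Finset V) {c : ℝ} (hc : 0 ≤ c) (q : List V) :
    ∀ (j : ℕ) (x : V), 0 ≤ Score I c q j x := by
  intro j
  induction j with
  | zero =>
    intro x
    rw [Score]
    split <;> norm_num
  | succ j ih =>
    intro x
    rw [Score]
    split
    · exact le_refl 0
    · exact Finset.sum_nonneg fun y _ =>
        mul_nonneg (div_nonneg (Real.sqrt_nonneg c) (Nat.cast_nonneg _)) (ih y)

lemma take_reverse_head? (p : List V) (s : ℕ) (hs : 1 ≤ s) (hsl : s ≤ p.length) :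
    ((p.take s).reverse).head? = some (p[s-1]'(by omega)) := by
  rw [List.head?_reverse, List.getLast?_eq_getElem?]
  rw [List.length_take, Nat.min_eq_left hsl, List.getElem?_take]
  rw [if_pos (by omega : s - 1 < s), List.getElem?_eq_getElem (by omega)]

lemma take_reverse_getElem? (p : List V) (s j : ℕ) (hs : 1 ≤ s) (hsl : s + j ≤ p.length) :
    ((p.take (s+j)).reverse)[j]? = some (p[s-1]'(by omega)) := by
  rw [List.getElem?_reverse (by simp; omega)]
  rw [List.length_take, Nat.min_eq_left hsl, List.getElem?_take]
  rw [if_pos (by omega), show s + j - 1 - j = s - 1 from by omega,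
    List.getElem?_eq_getElem (by omega)]

lemma diag_sum_bound [Fintype V] (I : V → Finset V) (hI : ∀ v, (I v).Nonempty)
    {c : ℝ} (hc0 : 0 ≤ c) (hc1 : c ≤ 1) (p : List V) :
    ∀ (d s : ℕ), 1 ≤ s → s + d ≤ p.length → ∀ x : V,
      ∑ j ∈ Finset.range (d+1), Score I c ((p.take (s+j)).reverse) j x ≤ 1 := by
  intro d
  induction d with
  | zero =>
    intro s hs hsd x
    rw [Finset.sum_range_one, Score, show s + 0 = s from rfl,
      take_reverse_head? p s hs (by omega)]
    split <;> norm_num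
  | succ d ih =>
    intro s hs hsd x
    rw [Finset.sum_range_succ']
    have hs1 : s - 1 < p.length := by omega
    by_cases hx : x = p[s-1]
    · -- all j ≥ 1 terms vanish; j = 0 term is 1
      have hzero : ∀ i ∈ Finset.range (d+1),
          Score I c ((p.take (s + (i+1))).reverse) (i+1) x = 0 := by
        intro i hi
        rw [Score, if_pos]
        rw [take_reverse_getElem? p s (i+1) hs
          (by simp only [Finset.mem_range] at hi; omega), hx]
      rw [Finset.sum_eq_zero hzero, Score, show s + 0 = s from rfl,
        take_reverse_head? p s hs (by omega), if_pos (by rw [hx]), zero_add]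
    · -- j = 0 term vanishes; recurse on the rest
      have h0 : Score I c ((p.take (s + 0)).reverse) 0 x = 0 := by
        rw [Score, show s + 0 = s from rfl, take_reverse_head? p s hs (by omega),
          if_neg (by simpa [eq_comm] using hx)]
      rw [h0, add_zero]
      have hterm : ∀ i ∈ Finset.range (d+1),
          Score I c ((p.take (s + (i+1))).reverse) (i+1) x =
          ∑ y ∈ I x, Real.sqrt c / ((I x).card : ℝ) *
            Score I c ((p.take (s+1+i)).reverse) i y := by
        intro i hi
        rw [Score, if_neg, show s + (i+1) = s+1+i from by omega]
        rw [take_reverse_getElem? p s (i+1) hs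
          (by simp only [Finset.mem_range] at hi; omega)]
        simpa [eq_comm] using hx
      rw [Finset.sum_congr rfl hterm, Finset.sum_comm]
      have hcard : (0:ℝ) < ((I x).card : ℝ) := by
        exact_mod_cast Finset.card_pos.mpr (hI x)
      have hC : 0 ≤ Real.sqrt c / ((I x).card : ℝ) :=
        div_nonneg (Real.sqrt_nonneg c) hcard.le
      calc ∑ y ∈ I x, ∑ i ∈ Finset.range (d+1),
            Real.sqrt c / ((I x).card : ℝ) * Score I c ((p.take (s+1+i)).reverse) i y
          = ∑ y ∈ I x, Real.sqrt c / ((I x).card : ℝ) *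
            ∑ i ∈ Finset.range (d+1), Score I c ((p.take (s+1+i)).reverse) i y := by
            simp [Finset.mul_sum]
        _ ≤ ∑ y ∈ I x, Real.sqrt c / ((I x).card : ℝ) * 1 := by
            refine Finset.sum_le_sum fun y _ => ?_
            exact mul_le_mul_of_nonneg_left (ih (s+1) (by omega) (by omega) y) hC
        _ = ((I x).card : ℝ) * (Real.sqrt c / ((I x).card : ℝ)) := by
            rw [Finset.sum_const, nsmul_eq_mul, mul_one]
        _ = Real.sqrt c := by field_simp
        _ ≤ 1 := Real.sqrt_le_one.mpr hc1

lemma restricted_sum_bound [Fintype V] (I : V → Finset V) (hI : ∀ v, (I v).Nonempty)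
    {c : ℝ} (hc0 : 0 ≤ c) (hc1 : c ≤ 1) (p : List V) :
    ∀ (m n s : ℕ), 1 ≤ s → s + m + n ≤ p.length → ∀ x : V,
      ∑ k ∈ Finset.range n, Score I c ((p.take (s + m + 1 + k)).reverse) (m + 1 + k) x
        ≤ Real.sqrt c ^ m := by
  intro m
  induction m with
  | zero =>
    intro n s hs h x
    have hF := diag_sum_bound I hI hc0 hc1 p n s hs (by omega) x
    rw [Finset.sum_range_succ'] at hF
    have h0 : 0 ≤ Score I c ((p.take (s+0)).reverse) 0 x := Score_nonneg I hc0 _ _ _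
    rw [pow_zero]
    calc ∑ k ∈ Finset.range n,
          Score I c ((p.take (s + 0 + 1 + k)).reverse) (0 + 1 + k) x
        = ∑ k ∈ Finset.range n,
          Score I c ((p.take (s + (k+1))).reverse) (k+1) x :=
          Finset.sum_congr rfl fun k _ => by
            rw [show s + 0 + 1 + k = s + (k+1) from by omega,
              show 0 + 1 + k = k + 1 from by omega]
      _ ≤ 1 := by linarith
  | succ m ih =>
    intro n s hs h x
    have hs1 : s - 1 < p.length := by omega
    have hrw : ∀ k, Score I c ((p.take (s + (m+1) + 1 + k)).reverse) (m + 1 + 1 + k) x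
        = Score I c ((p.take (s + (m + 2 + k))).reverse) ((m + 1 + k) + 1) x := by
      intro k
      rw [show s + (m+1) + 1 + k = s + (m + 2 + k) from by omega,
        show m + 1 + 1 + k = (m + 1 + k) + 1 from by omega]
    by_cases hx : x = p[s-1]
    · have hzero : ∀ k ∈ Finset.range n,
          Score I c ((p.take (s + (m+1) + 1 + k)).reverse) (m + 1 + 1 + k) x = 0 := by
        intro k hk
        rw [hrw k, Score, if_pos]
        rw [show m+1+k+1 = m+2+k from by omega]
        rw [take_reverse_getElem? p s (m+2+k) hs
          (by simp only [Finset.mem_range] at hk; omega), hx]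
      rw [Finset.sum_eq_zero hzero]
      positivity
    · have hterm : ∀ k ∈ Finset.range n,
          Score I c ((p.take (s + (m+1) + 1 + k)).reverse) (m + 1 + 1 + k) x =
          ∑ y ∈ I x, Real.sqrt c / ((I x).card : ℝ) *
            Score I c ((p.take (s + 1 + m + 1 + k)).reverse) (m + 1 + k) y := by
        intro k hk
        rw [hrw k, Score, if_neg, show s + (m + 2 + k) = s + 1 + m + 1 + k from by omega]
        rw [show m+1+k+1 = m+2+k from by omega]
        rw [take_reverse_getElem? p s (m+2+k) hs
          (by simp only [Finset.mem_range] at hk; omega)]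
        simpa [eq_comm] using hx
      rw [Finset.sum_congr rfl hterm, Finset.sum_comm]
      have hcard : (0:ℝ) < ((I x).card : ℝ) := by
        exact_mod_cast Finset.card_pos.mpr (hI x)
      have hC : 0 ≤ Real.sqrt c / ((I x).card : ℝ) :=
        div_nonneg (Real.sqrt_nonneg c) hcard.le
      calc ∑ y ∈ I x, ∑ k ∈ Finset.range n,
            Real.sqrt c / ((I x).card : ℝ) *
              Score I c ((p.take (s + 1 + m + 1 + k)).reverse) (m + 1 + k) y
          = ∑ y ∈ I x, Real.sqrt c / ((I x).card : ℝ) *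
            ∑ k ∈ Finset.range n,
              Score I c ((p.take (s + 1 + m + 1 + k)).reverse) (m + 1 + k) y := by
            simp [Finset.mul_sum]
        _ ≤ ∑ y ∈ I x, Real.sqrt c / ((I x).card : ℝ) * Real.sqrt c ^ m := by
            refine Finset.sum_le_sum fun y _ => ?_
            exact mul_le_mul_of_nonneg_left (ih n (s+1) (by omega) (by omega) y) hC
        _ = ((I x).card : ℝ) * (Real.sqrt c / ((I x).card : ℝ) * Real.sqrt c ^ m) := by
            rw [Finset.sum_const, nsmul_eq_mul]
        _ = Real.sqrt c ^ (m+1) := by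
            rw [pow_succ]
            field_simp

/-- Claim 2 in the appendix proof of the truncation-error lemma: for a fixed
sequence `W = p = (u_1,…,u_ℓ)` with `u_{k+1} ∈ I(u_k)`, an integer
`1 ≤ ℓ_t ≤ ℓ`, every node `x` and every `ℓ−ℓ_t ≤ d ≤ ℓ−1`, the diagonal sum of
PROBE scores restricted to prefixes of length greater than `ℓ_t` satisfies
`0 ≤ ∑_{j : 0 ≤ j ≤ d, ℓ−d+j > ℓ_t} Score^{(ℓ−d+j)}(x,j) ≤ (√c)^{d−(ℓ−ℓ_t)}`. -/
theorem restricted_diagonal_score_sum [Fintype V]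
    (I : V → Finset V) (hI : ∀ v, (I v).Nonempty)
    (c : ℝ) (hc0 : 0 < c) (hc1 : c < 1)
    (p : List V) (hchain : List.Chain' (fun a b => b ∈ I a) p)
    (ℓt : ℕ) (hℓt1 : 1 ≤ ℓt) (hℓt2 : ℓt ≤ p.length)
    (x : V) (d : ℕ) (hd1 : p.length - ℓt ≤ d) (hd2 : d ≤ p.length - 1) :
    0 ≤ ∑ j ∈ (Finset.range (d + 1)).filter (fun j => ℓt < p.length - d + j),
          Score I c ((p.take (p.length - d + j)).reverse) j x ∧
      ∑ j ∈ (Finset.range (d + 1)).filter (fun j => ℓt < p.length - d + j),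
          Score I c ((p.take (p.length - d + j)).reverse) j x ≤
        Real.sqrt c ^ (d - (p.length - ℓt)) := by
  have hl1 : 1 ≤ p.length := le_trans hℓt1 hℓt2
  constructor
  · exact Finset.sum_nonneg fun j _ => Score_nonneg I hc0.le _ _ _
  · set m := ℓt - (p.length - d) with hm
    set n := d - m with hn
    have hset : (Finset.range (d + 1)).filter (fun j => ℓt < p.length - d + j)
        = (Finset.range n).map ⟨fun k => m + 1 + k, add_right_injective (m+1)⟩ := by
      ext j
      simp only [Finset.mem_filter, Finset.mem_range, Finset.mem_map,
        Function.Embedding.coeFn_mk]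
      constructor
      · rintro ⟨h1, h2⟩
        exact ⟨j - (m+1), by omega, by omega⟩
      · rintro ⟨k, hk, rfl⟩
        omega
    rw [hset, Finset.sum_map, show d - (p.length - ℓt) = m from by omega]
    simp only [Function.Embedding.coeFn_mk]
    have := restricted_sum_bound I hI hc0.le hc1.le p m n (p.length - d)
      (by omega) (by omega) x
    refine le_trans (le_of_eq (Finset.sum_congr rfl fun k _ => ?_)) this
    rw [show p.length - d + (m + 1 + k) = p.length - d + m + 1 + k from by omega]
end
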